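/- arXiv:1911.13013 — 3 statements merged into one kernel-verified Lean document; each statement's English description precedes it below -/
import Mathlib

section
/- For every binary path P of length n with P ≠ 1_n = u^n, the degree of P satisfies δ(P) = n − 1 − lv(P), where lv(P) is the minimal height among all valleys of P. -/
open Finset

/-- The `x`-th step (1-indexed) of a binary path `P` of length `n`;
`true` denotes an upstep `u`, `false` a downstep `d`. -/
def stp (n : ℕ) (P : Fin n → Bool) (x : ℕ) : Bool :=
  if h : 1 ≤ x ∧ x ≤ n then P ⟨x - 1, by omega⟩ else true

/-- The height of the `x`-th lattice point of the path (the partial sum of `±1`'s). -/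
def ht (n : ℕ) (P : Fin n → Bool) (x : ℕ) : ℤ :=
  ∑ j ∈ Finset.Icc 1 x, (if stp n P j then (1 : ℤ) else -1)

/-- The order on binary paths: `P ≤ Q` iff every height of `P` is at most that of `Q`. -/
def pLE (n : ℕ) (P Q : Fin n → Bool) : Prop := ∀ x ≤ n, ht n P x ≤ ht n Q x

def pLT (n : ℕ) (P Q : Fin n → Bool) : Prop := pLE n P Q ∧ ¬ pLE n Q P

/-- `Q` covers `P` in the lattice of binary paths. -/
def covers (n : ℕ) (P Q : Fin n → Bool) : Prop :=
  pLT n P Q ∧ ∀ R, pLT n P R → ¬ pLT n R Q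

/-- The `x`-th point of `P` is a valley: last point of a maximal run of downsteps. -/
def valley (n : ℕ) (P : Fin n → Bool) (x : ℕ) : Prop :=
  1 ≤ x ∧ x ≤ n ∧ stp n P x = false ∧ (x = n ∨ stp n P (x + 1) = true)

/-- The maximum path `1_n = u^n`. -/
def pTop (n : ℕ) : Fin n → Bool := fun _ => true

/-- The minimum path `0_n = d^n`. -/
def pBot (n : ℕ) : Fin n → Bool := fun _ => false

/-- The filling of `P`: the path obtained by turning every valley of `P` into a peak
(equivalently, the join of all elements covering `P`). -/
def fill (n : ℕ) (P : Fin n → Bool) : Fin n → Bool := fun i =>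
  if P i then !(decide (1 ≤ (i : ℕ) ∧ stp n P (i : ℕ) = false))
  else decide ((i : ℕ) + 1 = n ∨ stp n P ((i : ℕ) + 2) = true)

/-- `lv P`: the minimal height among all valleys of `P`. -/
noncomputable def lv (n : ℕ) (P : Fin n → Bool) : ℤ :=
  sInf {h : ℤ | ∃ x, valley n P x ∧ ht n P x = h}


section Aux
variable (n : ℕ) (P : Fin n → Bool)

lemma stp_out {x : ℕ} (h : ¬ (1 ≤ x ∧ x ≤ n)) : stp n P x = true := by
  simp [stp, h]

lemma stp_fin (i : Fin n) : stp n P ((i : ℕ) + 1) = P i := by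
  have h : 1 ≤ (i:ℕ)+1 ∧ (i:ℕ)+1 ≤ n := ⟨by omega, i.2⟩
  simp only [stp, dif_pos h]
  congr 1

lemma ht_zero : ht n P 0 = 0 := by simp [ht]

lemma ht_succ (x : ℕ) :
    ht n P (x + 1) = ht n P x + (if stp n P (x+1) then (1:ℤ) else -1) := by
  unfold ht
  exact Finset.sum_Icc_succ_top (by omega : 1 ≤ x + 1) _

lemma ht_le : ∀ x : ℕ, ht n P x ≤ x := by
  intro x
  induction x with
  | zero => simp [ht_zero]
  | succ k ih =>
      rw [ht_succ]
      push_cast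
      split <;> omega

lemma neg_le_ht : ∀ x : ℕ, -(x:ℤ) ≤ ht n P x := by
  intro x
  induction x with
  | zero => simp [ht_zero]
  | succ k ih =>
      rw [ht_succ]
      push_cast
      split <;> omega

lemma ht_down_le {x : ℕ} (h1 : 1 ≤ x) (hs : stp n P x = false) :
    ht n P x ≤ (x:ℤ) - 2 := by
  obtain ⟨y, rfl⟩ : ∃ y, x = y + 1 := ⟨x - 1, by omega⟩
  rw [ht_succ, hs]
  have := ht_le n P y
  push_cast
  omega

end Aux
section Aux2
variable (n : ℕ) (P : Fin n → Bool)

lemma stp_top (x : ℕ) : stp n (pTop n) x = true := by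
  unfold stp pTop; split <;> rfl

lemma ne_top_iff : P ≠ pTop n ↔ ∃ x, 1 ≤ x ∧ x ≤ n ∧ stp n P x = false := by
  constructor
  · intro h
    by_contra hc
    push_neg at hc
    apply h
    funext i
    have := hc ((i:ℕ)+1) (by omega) (by omega)
    rw [stp_fin] at this
    simpa [pTop] using this
  · rintro ⟨x, h1, h2, h3⟩ rfl
    rw [stp_top] at h3
    simp at h3

lemma down_to_valley :
    ∀ k x, n - x ≤ k → 1 ≤ x → x ≤ n → stp n P x = false →
      ∃ y, valley n P y ∧ ht n P y ≤ ht n P x := by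
  intro k
  induction k with
  | zero =>
      intro x hk h1 h2 h3
      have hx : x = n := by omega
      exact ⟨x, ⟨h1, h2, h3, Or.inl hx⟩, le_refl _⟩
  | succ k ih =>
      intro x hk h1 h2 h3
      rcases eq_or_lt_of_le h2 with hx | hx
      · exact ⟨x, ⟨h1, h2, h3, Or.inl hx⟩, le_refl _⟩
      · by_cases hs : stp n P (x+1) = true
        · exact ⟨x, ⟨h1, h2, h3, Or.inr hs⟩, le_refl _⟩
        · have hs' : stp n P (x+1) = false := by
            cases h : stp n P (x+1) <;> simp_all
          obtain ⟨y, hy, hle⟩ := ih (x+1) (by omega) (by omega) (by omega) hs'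
          refine ⟨y, hy, le_trans hle ?_⟩
          rw [ht_succ, hs']
          simp

lemma valley_mem_bddBelow : BddBelow {h : ℤ | ∃ x, valley n P x ∧ ht n P x = h} := by
  refine ⟨-(n:ℤ), ?_⟩
  rintro h ⟨x, hx, rfl⟩
  have h1 := neg_le_ht n P x
  have h2 : (x:ℤ) ≤ n := by exact_mod_cast hx.2.1
  omega

lemma lv_le_valley {x : ℕ} (hx : valley n P x) : lv n P ≤ ht n P x :=
  csInf_le (valley_mem_bddBelow n P) ⟨x, hx, rfl⟩

lemma lv_le_down {x : ℕ} (h1 : 1 ≤ x) (h2 : x ≤ n) (h3 : stp n P x = false) :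
    lv n P ≤ ht n P x := by
  obtain ⟨y, hy, hle⟩ := down_to_valley n P (n - x) x (le_refl _) h1 h2 h3
  exact le_trans (lv_le_valley n P hy) hle

lemma le_lv (hne : P ≠ pTop n) {c : ℤ} (hc : ∀ x, valley n P x → c ≤ ht n P x) :
    c ≤ lv n P := by
  obtain ⟨x, h1, h2, h3⟩ := (ne_top_iff n P).1 hne
  obtain ⟨y, hy, -⟩ := down_to_valley n P (n - x) x (le_refl _) h1 h2 h3
  exact le_csInf ⟨_, y, hy, rfl⟩ (by rintro b ⟨z, hz, rfl⟩; exact hc z hz)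

lemma lv_mem (hne : P ≠ pTop n) : ∃ x, valley n P x ∧ ht n P x = lv n P := by
  obtain ⟨x, h1, h2, h3⟩ := (ne_top_iff n P).1 hne
  obtain ⟨y, hy, -⟩ := down_to_valley n P (n - x) x (le_refl _) h1 h2 h3
  have := Int.csInf_mem (s := {h : ℤ | ∃ x, valley n P x ∧ ht n P x = h})
    ⟨_, y, hy, rfl⟩ (valley_mem_bddBelow n P)
  exact this

lemma lv_le_sub (hne : P ≠ pTop n) : lv n P ≤ (n:ℤ) - 2 := by
  obtain ⟨x, hx, he⟩ := lv_mem n P hne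
  rw [← he]
  have h1 := ht_down_le n P hx.1 hx.2.2.1
  have h2 : (x:ℤ) ≤ n := by exact_mod_cast hx.2.1
  omega

end Aux2
section Aux3
variable (n : ℕ) (P : Fin n → Bool)

lemma stp_eq (z : ℕ) (hz : z + 1 ≤ n) : stp n P (z+1) = P ⟨z, by omega⟩ := by
  have h : 1 ≤ z+1 ∧ z+1 ≤ n := ⟨by omega, hz⟩
  simp only [stp, dif_pos h]
  congr 1

lemma fill_stp (z : ℕ) (hz : z + 1 ≤ n) :
    stp n (fill n P) (z+1) =
      if stp n P (z+1) = true then !(decide (1 ≤ z ∧ stp n P z = false))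
      else decide (z + 1 = n ∨ stp n P (z + 2) = true) := by
  have h : 1 ≤ z+1 ∧ z+1 ≤ n := ⟨by omega, hz⟩
  simp only [stp, dif_pos h, fill]
  rfl

open Classical in
lemma ht_fill : ∀ y, y ≤ n → ht n (fill n P) y
    = ht n P y + (if valley n P y then 2 else 0) := by
  intro y
  induction y with
  | zero =>
      intro _
      have : ¬ valley n P 0 := fun h => by have := h.1; omega
      simp [ht_zero, this]
  | succ z ih =>
      intro hz
      have hz' : z ≤ n := by omega
      rw [ht_succ, ht_succ, ih hz', fill_stp n P z hz]
      cases hup : stp n P (z+1) with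
      | true =>
          have hv1 : ¬ valley n P (z+1) := fun h => by
            have hh := h.2.2.1; rw [hup] at hh; exact Bool.noConfusion hh
          by_cases hv : 1 ≤ z ∧ stp n P z = false
          · have hvz : valley n P z := ⟨hv.1, by omega, hv.2, Or.inr hup⟩
            simp [hv, hvz, hv1]
            omega
          · have hvz : ¬ valley n P z := fun h => hv ⟨h.1, h.2.2.1⟩
            simp [hv, hvz, hv1]
      | false =>
          have hvz : ¬ valley n P z := by
            intro h
            rcases h.2.2.2 with h' | h'
            · omega
            · rw [hup] at h'; exact Bool.noConfusion h'
          by_cases hv : z + 1 = n ∨ stp n P (z+2) = true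
          · have hv1 : valley n P (z+1) := ⟨by omega, hz, hup, hv⟩
            simp [hv, hvz, hv1]
            omega
          · have hv1 : ¬ valley n P (z+1) := fun h => hv h.2.2.2
            simp [hv, hvz, hv1]

end Aux3
section Aux4
variable (n : ℕ) (P : Fin n → Bool)

lemma fill_down_char (z : ℕ) (hz : z + 1 ≤ n)
    (hf : stp n (fill n P) (z+1) = false) :
    (stp n P (z+1) = true ∧ 1 ≤ z ∧ stp n P z = false) ∨
    (stp n P (z+1) = false ∧ ¬ (z + 1 = n ∨ stp n P (z+2) = true)) := by
  rw [fill_stp n P z hz] at hf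
  cases hup : stp n P (z+1)
  · right
    rw [hup] at hf
    simp at hf
    exact ⟨rfl, by simpa using hf⟩
  · left
    rw [hup] at hf
    simp at hf
    exact ⟨rfl, hf⟩

lemma lv_add_one_le (z : ℕ) (hz : z + 1 ≤ n)
    (hf : stp n (fill n P) (z+1) = false) :
    lv n P + 1 ≤ ht n (fill n P) (z+1) := by
  rcases fill_down_char n P z hz hf with ⟨hup, hv1, hv2⟩ | ⟨hdn, hnv⟩
  · have hvz : valley n P z := ⟨hv1, by omega, hv2, Or.inr hup⟩
    have hnv1 : ¬ valley n P (z+1) := fun h => by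
      have hh := h.2.2.1; rw [hup] at hh; exact Bool.noConfusion hh
    rw [ht_fill n P (z+1) hz]
    simp only [hnv1, if_false]
    rw [ht_succ, hup]
    have := lv_le_valley n P hvz
    simp only [if_true]
    omega
  · have hnv1 : ¬ valley n P (z+1) := fun h => hnv h.2.2.2
    push_neg at hnv
    have h2 : z + 2 ≤ n := by omega
    have h3 : stp n P (z+2) = false := by
      cases h : stp n P (z+2)
      · rfl
      · exact absurd h hnv.2
    have := lv_le_down n P (x := z+2) (by omega) h2 h3
    rw [ht_fill n P (z+1) hz]
    simp only [hnv1, if_false]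
    have he : ht n P (z+2) = ht n P (z+1) + (-1) := by rw [ht_succ, h3]; simp
    omega

lemma fill_eq_top (hlv : lv n P = (n:ℤ) - 2) : fill n P = pTop n := by
  by_contra h
  obtain ⟨y, hy1, hy2, hy3⟩ := (ne_top_iff n (fill n P)).1 h
  obtain ⟨z, rfl⟩ : ∃ z, y = z + 1 := ⟨y - 1, by omega⟩
  have h1 := lv_add_one_le n P z hy2 hy3
  have h2 := ht_down_le n (fill n P) hy1 hy3
  have h3 : ((z:ℤ) + 1) ≤ n := by exact_mod_cast hy2
  push_cast at h2
  omega

lemma exists_down_prefix : ∀ x, x ≤ n →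
    (∃ w, 1 ≤ w ∧ w ≤ x ∧ stp n P w = false ∧ ht n P w ≤ ht n P x) ∨
    ht n P x = x := by
  intro x
  induction x with
  | zero => intro _; right; simp [ht_zero]
  | succ k ih =>
      intro h
      cases hs : stp n P (k+1)
      · left; exact ⟨k+1, by omega, le_refl _, hs, le_refl _⟩
      · rcases ih (by omega) with ⟨w, h1, h2, h3, h4⟩ | he
        · left
          refine ⟨w, h1, by omega, h3, ?_⟩
          rw [ht_succ, hs]
          simp only [if_true]
          omega
        · right
          rw [ht_succ, hs, he]
          simp only [if_true]
          push_cast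
          ring

lemma exists_fill_down (hne : P ≠ pTop n) (hlv : lv n P ≤ (n:ℤ) - 3) :
    ∃ z, z + 1 ≤ n ∧ stp n (fill n P) (z+1) = false ∧
      ht n (fill n P) (z+1) = lv n P + 1 := by
  by_cases hn : ∃ v, valley n P v ∧ ht n P v = lv n P ∧ v < n
  · obtain ⟨v, hv, hve, hvn⟩ := hn
    have hup : stp n P (v+1) = true := hv.2.2.2.resolve_left (by omega)
    have hnv1 : ¬ valley n P (v+1) := fun h => by
      have hh := h.2.2.1; rw [hup] at hh; exact Bool.noConfusion hh
    refine ⟨v, by omega, ?_, ?_⟩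
    · rw [fill_stp n P v (by omega), hup]
      simp [hv.1, hv.2.2.1]
    · rw [ht_fill n P (v+1) (by omega)]
      simp only [hnv1, if_false]
      rw [ht_succ, hup, hve]
      simp
  · push_neg at hn
    obtain ⟨x, hx, hxe⟩ := lv_mem n P hne
    have hxn : x = n := by
      have h1 := hn x hx hxe
      have h2 := hx.2.1
      omega
    subst hxn
    have hdn : stp x P x = false := hx.2.2.1
    have hn2 : 2 ≤ x := by
      by_contra h2
      have h1 : x = 1 := by have := hx.1; omega
      have h3 := neg_le_ht x P x
      rw [hxe] at h3
      omega
    obtain ⟨z, hz⟩ : ∃ z, x = z + 2 := ⟨x - 2, by omega⟩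
    subst hz
    have E2 : ht (z+2) P (z+2) = ht (z+2) P (z+1) + (-1) := by
      rw [ht_succ, hdn]; simp
    cases hs : stp (z+2) P (z+1)
    · refine ⟨z, by omega, ?_, ?_⟩
      · rw [fill_stp _ P z (by omega), hs]
        simp [hdn]
      · have hnv : ¬ valley (z+2) P (z+1) := by
          intro h
          rcases h.2.2.2 with h' | h'
          · omega
          · rw [hdn] at h'; exact Bool.noConfusion h'
        rw [ht_fill _ P (z+1) (by omega)]
        simp only [hnv, if_false]
        omega
    · exfalso
      have E1 : ht (z+2) P (z+1) = ht (z+2) P z + 1 := by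
        rw [ht_succ, hs]; simp
      have hz1 : 1 ≤ z := by
        by_contra h0
        have hz0 : z = 0 := by omega
        have h00 : ht (z+2) P z = 0 := by subst hz0; exact ht_zero _ _
        push_cast at hlv
        omega
      cases hs2 : stp (z+2) P z
      · have hvz : valley (z+2) P z := ⟨hz1, by omega, hs2, Or.inr hs⟩
        have := hn z hvz (by omega)
        omega
      · obtain ⟨w, rfl⟩ : ∃ w, z = w + 1 := ⟨z - 1, by omega⟩
        have E0 : ht (w+1+2) P (w+1) = ht (w+1+2) P w + 1 := by
          rw [ht_succ, hs2]; simp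
        rcases exists_down_prefix _ P w (by omega) with ⟨d, hd1, hd2, hd3, hd4⟩ | he
        · have := lv_le_down _ P hd1 (by omega) hd3
          omega
        · push_cast at hlv
          omega

end Aux4
section Aux5
variable (n : ℕ) (P : Fin n → Bool)

lemma lv_fill (hne : P ≠ pTop n) (hlv : lv n P ≤ (n:ℤ) - 3) :
    fill n P ≠ pTop n ∧ lv n (fill n P) = lv n P + 1 := by
  obtain ⟨z, hz, hf, hh⟩ := exists_fill_down n P hne hlv
  have hfne : fill n P ≠ pTop n := (ne_top_iff n _).2 ⟨z+1, by omega, hz, hf⟩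
  refine ⟨hfne, le_antisymm ?_ ?_⟩
  · have := lv_le_down n (fill n P) (x := z+1) (by omega) hz hf
    omega
  · refine le_lv n (fill n P) hfne ?_
    intro v hv
    obtain ⟨w, rfl⟩ : ∃ w, v = w + 1 := ⟨v - 1, by have := hv.1; omega⟩
    have := lv_add_one_le n P w hv.2.1 hv.2.2.1
    omega

end Aux5

theorem stmt4_aux (n : ℕ) (P : Fin n → Bool) (hP : P ≠ pTop n) :
    {k : ℕ | (fill n)^[k] P = pTop n}.Nonempty ∧
    ((sInf {k : ℕ | (fill n)^[k] P = pTop n} : ℕ) : ℤ) = (n : ℤ) - 1 - lv n P := by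
  suffices H : ∀ m (P : Fin n → Bool), P ≠ pTop n → ((n:ℤ) - 2 - lv n P).toNat = m →
      {k : ℕ | (fill n)^[k] P = pTop n}.Nonempty ∧
      ((sInf {k : ℕ | (fill n)^[k] P = pTop n} : ℕ) : ℤ) = (n : ℤ) - 1 - lv n P by
    exact H _ P hP rfl
  intro m
  induction m using Nat.strong_induction_on with
  | _ m IH =>
    intro P hP hm
    have hub : lv n P ≤ (n:ℤ) - 2 := lv_le_sub n P hP
    have h0 : 0 ∉ {k : ℕ | (fill n)^[k] P = pTop n} := by
      simpa [Set.mem_setOf_eq] using hP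
    by_cases hcase : lv n P = (n:ℤ) - 2
    · have htop : fill n P = pTop n := fill_eq_top n P hcase
      have h1 : 1 ∈ {k : ℕ | (fill n)^[k] P = pTop n} := by
        simp [Set.mem_setOf_eq, htop]
      refine ⟨⟨1, h1⟩, ?_⟩
      have hs : sInf {k : ℕ | (fill n)^[k] P = pTop n} = 1 := by
        refine le_antisymm (Nat.sInf_le h1) ?_
        have hmem := Nat.sInf_mem (⟨1, h1⟩ : {k : ℕ | (fill n)^[k] P = pTop n}.Nonempty)
        by_contra hc
        have : sInf {k : ℕ | (fill n)^[k] P = pTop n} = 0 := by omega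
        rw [this] at hmem
        exact h0 hmem
      rw [hs, hcase]
      push_cast
      ring
    · have hlv3 : lv n P ≤ (n:ℤ) - 3 := by omega
      obtain ⟨hfne, hfl⟩ := lv_fill n P hP hlv3
      have hmeas : ((n:ℤ) - 2 - lv n (fill n P)).toNat < m := by
        rw [hfl]
        omega
      obtain ⟨hne', heq'⟩ := IH _ hmeas (fill n P) hfne rfl
      have hiter : ∀ k, (fill n)^[k+1] P = (fill n)^[k] (fill n P) := fun k =>
        Function.iterate_succ_apply (fill n) k P
      have hmem := Nat.sInf_mem hne'
      have h1 : (sInf {k : ℕ | (fill n)^[k] (fill n P) = pTop n} + 1) ∈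
          {k : ℕ | (fill n)^[k] P = pTop n} := by
        simp only [Set.mem_setOf_eq, hiter]
        exact hmem
      refine ⟨⟨_, h1⟩, ?_⟩
      have hSle := Nat.sInf_le h1
      have hmemS := Nat.sInf_mem (⟨_, h1⟩ : {k : ℕ | (fill n)^[k] P = pTop n}.Nonempty)
      have hpos : 1 ≤ sInf {k : ℕ | (fill n)^[k] P = pTop n} := by
        by_contra hc
        have he : sInf {k : ℕ | (fill n)^[k] P = pTop n} = 0 := by omega
        rw [he] at hmemS
        exact h0 hmemS
      obtain ⟨t, htt⟩ : ∃ t, sInf {k : ℕ | (fill n)^[k] P = pTop n} = t + 1 :=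
        ⟨sInf {k : ℕ | (fill n)^[k] P = pTop n} - 1, by omega⟩
      have htS : t ∈ {k : ℕ | (fill n)^[k] (fill n P) = pTop n} := by
        have h2 := hmemS
        rw [htt] at h2
        simp only [Set.mem_setOf_eq] at h2 ⊢
        rw [← hiter]
        exact h2
      have hge := Nat.sInf_le htS
      have hfin : sInf {k : ℕ | (fill n)^[k] P = pTop n}
          = sInf {k : ℕ | (fill n)^[k] (fill n P) = pTop n} + 1 := by omega
      rw [hfin]
      push_cast
      rw [heq', hfl]
      ring
/-- For `P ≠ u^n`, the degree `δ(P)` (least `k` with `fill^[k] P = u^n`) exists and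
equals `n − 1 − lv(P)`. -/
theorem stmt4 (n : ℕ) (P : Fin n → Bool) (hP : P ≠ pTop n) :
    {k : ℕ | (fill n)^[k] P = pTop n}.Nonempty ∧
    ((sInf {k : ℕ | (fill n)^[k] P = pTop n} : ℕ) : ℤ) = (n : ℤ) - 1 - lv n P := by
  exact stmt4_aux n P hP
end

section
/- For binary paths P, Q of length n both starting with a downstep, P ≤ Q if and only if the shifted diagram F(Q) is a subset of the shifted diagram F(P). -/
open Finset

/-- The set of positions of downsteps of `P`. -/
def dsteps (n : ℕ) (P : Fin n → Bool) : Finset (Fin n) :=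
  Finset.univ.filter fun j => P j = false

/-- `m(P) = |P|_d`, the number of downsteps of `P`. -/
def nd (n : ℕ) (P : Fin n → Bool) : ℕ := (dsteps n P).card

/-- The 0-indexed position of the `(i+1)`-st downstep of `P`. -/
def dpos (n : ℕ) (P : Fin n → Bool) (i : Fin (nd n P)) : ℕ :=
  (((dsteps n P).orderIsoOfFin rfl i : {x // x ∈ dsteps n P}) : Fin n)

/-- The part `λ_{i+1} = n − (i+1) − k_{i+1} + 1` of the strict partition `λ(P)`;
since `k_{i+1} = dpos i − i`, this equals `n − dpos i`. -/
def lam (n : ℕ) (P : Fin n → Bool) (i : Fin (nd n P)) : ℕ := n - dpos n P i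

/-- The shifted diagram `F(P)` of shape `λ(P)`, as the set of (1-indexed) cells
`(i, j)` with `i ∈ [m]`, `i ≤ j ≤ λ_i + i − 1`. -/
def F (n : ℕ) (P : Fin n → Bool) : Set (ℕ × ℕ) :=
  {c | ∃ i : Fin (nd n P),
    c.1 = (i : ℕ) + 1 ∧ (i : ℕ) + 1 ≤ c.2 ∧ c.2 ≤ lam n P i + (i : ℕ)}


/-- Number of downsteps among the first `x` steps. -/
def cnt (n : ℕ) (P : Fin n → Bool) (x : ℕ) : ℕ :=
  ((dsteps n P).filter (fun j : Fin n => (j : ℕ) < x)).card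

lemma cnt_le_nd (n : ℕ) (P : Fin n → Bool) (x : ℕ) : cnt n P x ≤ nd n P :=
  Finset.card_le_card (Finset.filter_subset _ _)

lemma ht_eq (n : ℕ) (P : Fin n → Bool) (x : ℕ) (hx : x ≤ n) :
    ht n P x = (x : ℤ) - 2 * cnt n P x := by
  have h1 : ht n P x =
      (x : ℤ) - 2 * ((Finset.Icc 1 x).filter (fun j => stp n P j = false)).card := by
    unfold ht
    have : ∀ j ∈ Finset.Icc 1 x, (if stp n P j then (1 : ℤ) else -1)
        = 1 - (if stp n P j = false then (2 : ℤ) else 0) := by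
      intro j _; cases h : stp n P j <;> simp
    rw [Finset.sum_congr rfl this, Finset.sum_sub_distrib, ← Finset.sum_filter]
    simp [Finset.sum_const, Nat.card_Icc, mul_comm]
  rw [h1]
  have hc : ((Finset.Icc 1 x).filter (fun j => stp n P j = false)).card
      = ((dsteps n P).filter (fun j : Fin n => (j : ℕ) < x)).card := by
    refine Finset.card_bij (fun j hj => ⟨j - 1, by
        simp only [Finset.mem_filter, Finset.mem_Icc] at hj; omega⟩) ?_ ?_ ?_
    · intro j hj
      simp only [Finset.mem_filter, Finset.mem_Icc] at hj
      obtain ⟨⟨h1j, h2j⟩, h3j⟩ := hj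
      simp only [dsteps, Finset.mem_filter, Finset.mem_univ, true_and]
      constructor
      · unfold stp at h3j
        rw [dif_pos ⟨h1j, le_trans h2j hx⟩] at h3j
        exact h3j
      · omega
    · intro a ha b hb hab
      simp only [Finset.mem_filter, Finset.mem_Icc] at ha hb
      simp only [Fin.mk.injEq] at hab
      omega
    · intro b hb
      simp only [dsteps, Finset.mem_filter, Finset.mem_univ, true_and] at hb
      refine ⟨(b : ℕ) + 1, ?_, ?_⟩
      · simp only [Finset.mem_filter, Finset.mem_Icc]
        have := b.2
        refine ⟨⟨by omega, by omega⟩, ?_⟩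
        unfold stp
        rw [dif_pos ⟨by omega, by omega⟩]
        simpa using hb.1
      · apply Fin.ext
        simp
  rw [cnt, hc]

lemma lowerB {n m : ℕ} (s : Finset (Fin n)) (h : s.card = m) (i : Fin m) (x : ℕ) :
    (i : ℕ) + 1 ≤ (s.filter (fun j : Fin n => (j : ℕ) < x)).card ↔
      ((s.orderIsoOfFin h i : Fin n) : ℕ) < x := by
  set e := s.orderIsoOfFin h with he
  have hmem : ∀ k : Fin m, (e k : Fin n) ∈ s := fun k => (e k).2
  have hmono : StrictMono (fun k => (e k : Fin n)) := fun a b hab => by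
    exact Subtype.coe_lt_coe.mpr (e.strictMono hab)
  have hcard : (s.filter (fun j : Fin n => (j : ℕ) < x)).card
      = (Finset.univ.filter (fun k : Fin m => ((e k : Fin n) : ℕ) < x)).card := by
    refine (Finset.card_bij (fun k _ => (e k : Fin n)) ?_ ?_ ?_).symm
    · intro k hk
      simp only [mem_filter, mem_univ, true_and] at hk ⊢
      exact ⟨hmem k, hk⟩
    · intro a _ b _ hab
      exact e.injective (Subtype.coe_injective hab)
    · intro b hb
      simp only [mem_filter] at hb
      refine ⟨e.symm ⟨b, hb.1⟩, ?_, ?_⟩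
      · simp only [mem_filter, mem_univ, true_and, OrderIso.apply_symm_apply]
        exact hb.2
      · simp
  rw [hcard]
  constructor
  · intro hc
    by_contra hx
    push_neg at hx
    have hsub : (Finset.univ.filter (fun k : Fin m => ((e k : Fin n) : ℕ) < x))
        ⊆ Finset.Iio i := by
      intro k hk
      simp only [mem_filter, mem_univ, true_and] at hk
      rw [Finset.mem_Iio]
      by_contra hki
      push_neg at hki
      have h2 : ((e i : Fin n) : ℕ) ≤ ((e k : Fin n) : ℕ) := hmono.monotone hki
      omega
    have := Finset.card_le_card hsub
    rw [Fin.card_Iio] at this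
    omega
  · intro hx
    have hsub : Finset.Iic i ⊆
        (Finset.univ.filter (fun k : Fin m => ((e k : Fin n) : ℕ) < x)) := by
      intro k hk
      rw [Finset.mem_Iic] at hk
      simp only [mem_filter, mem_univ, true_and]
      have h2 : ((e k : Fin n) : ℕ) ≤ ((e i : Fin n) : ℕ) := hmono.monotone hk
      omega
    have := Finset.card_le_card hsub
    rw [Fin.card_Iic] at this
    omega

lemma cnt_iff (n : ℕ) (P : Fin n → Bool) (i : Fin (nd n P)) (x : ℕ) :
    (i : ℕ) + 1 ≤ cnt n P x ↔ dpos n P i < x :=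
  lowerB (dsteps n P) rfl i x

lemma dpos_lt (n : ℕ) (P : Fin n → Bool) (i : Fin (nd n P)) : dpos n P i < n :=
  (((dsteps n P).orderIsoOfFin rfl i : {x // x ∈ dsteps n P}) : Fin n).2

/-- For paths `P`, `Q` of length `n` both starting with a downstep,
`P ≤ Q` iff `F(Q) ⊆ F(P)`. -/
theorem stmt11 (n : ℕ) (P Q : Fin n → Bool) (hn : 0 < n)
    (hP : stp n P 1 = false) (hQ : stp n Q 1 = false) :
    pLE n P Q ↔ F n Q ⊆ F n P := by
  have hcnt : pLE n P Q ↔ ∀ x ≤ n, cnt n Q x ≤ cnt n P x := by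
    constructor
    · intro h x hx
      have := h x hx
      rw [ht_eq n P x hx, ht_eq n Q x hx] at this
      omega
    · intro h x hx
      rw [ht_eq n P x hx, ht_eq n Q x hx]
      have := h x hx
      omega
  have hcond : (∀ x ≤ n, cnt n Q x ≤ cnt n P x) ↔
      ∀ i : Fin (nd n Q), ∃ hi : (i : ℕ) < nd n P, dpos n P ⟨i, hi⟩ ≤ dpos n Q i := by
    constructor
    · intro h i
      have hdq := dpos_lt n Q i
      have h1 : (i : ℕ) + 1 ≤ cnt n Q (dpos n Q i + 1) :=
        (cnt_iff n Q i _).mpr (by omega)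
      have h2 : (i : ℕ) + 1 ≤ cnt n P (dpos n Q i + 1) :=
        le_trans h1 (h _ (by omega))
      have hi : (i : ℕ) < nd n P := by
        have := cnt_le_nd n P (dpos n Q i + 1)
        omega
      refine ⟨hi, ?_⟩
      have := (cnt_iff n P ⟨i, hi⟩ (dpos n Q i + 1)).mp h2
      omega
    · intro h x hx
      rcases Nat.eq_zero_or_pos (cnt n Q x) with h0 | h0
      · omega
      have hcq := cnt_le_nd n Q x
      set c := cnt n Q x with hc
      have hlt : c - 1 < nd n Q := by omega
      have hdq : dpos n Q ⟨c - 1, hlt⟩ < x := by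
        refine (cnt_iff n Q ⟨c - 1, hlt⟩ x).mp ?_
        simp only
        omega
      obtain ⟨hi, hle⟩ := h ⟨c - 1, hlt⟩
      have hle' : dpos n P ⟨c - 1, hi⟩ ≤ dpos n Q ⟨c - 1, hlt⟩ := hle
      have : (c - 1) + 1 ≤ cnt n P x := (cnt_iff n P ⟨c - 1, hi⟩ x).mpr (by omega)
      omega
  rw [hcnt, hcond]
  constructor
  · intro h c hc
    obtain ⟨i, h1, h2, h3⟩ := hc
    obtain ⟨hi, hle⟩ := h i
    have hdq := dpos_lt n Q i
    have hdp := dpos_lt n P ⟨i, hi⟩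
    refine ⟨⟨i, hi⟩, h1, h2, ?_⟩
    simp only [lam] at h3 ⊢
    omega
  · intro h i
    have hdq := dpos_lt n Q i
    have hmem : ((i : ℕ) + 1, lam n Q i + (i : ℕ)) ∈ F n Q := by
      refine ⟨i, rfl, ?_, le_refl _⟩
      simp only [lam]
      omega
    obtain ⟨i', h1, h2, h3⟩ := h hmem
    simp only at h1 h2 h3
    have hii : (i' : ℕ) = (i : ℕ) := by omega
    have hi : (i : ℕ) < nd n P := hii ▸ i'.2
    refine ⟨hi, ?_⟩
    have hdp := dpos_lt n P i'
    have heq : (⟨(i : ℕ), hi⟩ : Fin (nd n P)) = i' := Fin.ext hii.symm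
    rw [heq]
    simp only [lam] at h3
    omega
end

section
/- Under the bijection between P–1_n multichains of length k and shifted tableaux T of shape λ(P) with max(T) ≤ k (for P of length n starting with d), a multichain is a chain (all inequalities strict) if and only if the set of entries of the corresponding tableau is exactly the interval {1, 2, …, k}. -/
open Finset

/-- The `x`-coordinate `n + i − j` of the lattice point of cell `c = (i,j)`. -/
def cellX (n : ℕ) (c : ℕ × ℕ) : ℕ := n + c.1 - c.2

/-- The `y`-coordinate `n − i − j` of the lattice point of cell `c = (i,j)`. -/
def cellY (n : ℕ) (c : ℕ × ℕ) : ℤ := (n : ℤ) - c.1 - c.2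

/-- A shifted tableau of shape `λ(P)`: positive entries, weakly increasing along
rows and columns. -/
def isTab (n : ℕ) (P : Fin n → Bool) (T : {c : ℕ × ℕ // c ∈ F n P} → ℕ) : Prop :=
  (∀ c, 0 < T c) ∧
  (∀ c c' : {c : ℕ × ℕ // c ∈ F n P},
    c.1.1 = c'.1.1 → c.1.2 + 1 = c'.1.2 → T c ≤ T c') ∧
  (∀ c c' : {c : ℕ × ℕ // c ∈ F n P},
    c.1.1 + 1 = c'.1.1 → c.1.2 = c'.1.2 → T c ≤ T c')

/-- A shifted tableau is strictly increasing along rows and columns. -/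
def isStrictTab (n : ℕ) (P : Fin n → Bool)
    (T : {c : ℕ × ℕ // c ∈ F n P} → ℕ) : Prop :=
  (∀ c c' : {c : ℕ × ℕ // c ∈ F n P},
    c.1.1 = c'.1.1 → c.1.2 + 1 = c'.1.2 → T c < T c') ∧
  (∀ c c' : {c : ℕ × ℕ // c ∈ F n P},
    c.1.1 + 1 = c'.1.1 → c.1.2 = c'.1.2 → T c < T c')

/-- A multichain `P = P_0 ≤ P_1 ≤ ⋯ ≤ P_k = u^n`. -/
def isMultichain (n k : ℕ) (P : Fin n → Bool)
    (C : Fin (k + 1) → Fin n → Bool) : Prop :=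
  (∀ i : Fin k, pLE n (C i.castSucc) (C i.succ)) ∧ C 0 = P ∧ C (Fin.last k) = pTop n

/-- The defining relation of the bijection: the entry at cell `(i,j)` is `k − ξ`
for the unique `ξ` with `h_{n+i−j}(P_ξ) ≤ n − i − j < h_{n+i−j}(P_{ξ+1})`. -/
def corr (n k : ℕ) (P : Fin n → Bool) (C : Fin (k + 1) → Fin n → Bool)
    (T : {c : ℕ × ℕ // c ∈ F n P} → ℕ) : Prop :=
  ∀ (c : {c : ℕ × ℕ // c ∈ F n P}) (ξ : ℕ) (hξ : ξ < k),
    (T c = k - ξ ↔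
      (ht n (C ⟨ξ, by omega⟩) (cellX n c.1) ≤ cellY n c.1 ∧
       cellY n c.1 < ht n (C ⟨ξ + 1, by omega⟩) (cellX n c.1)))

/-! A cell `(i, j)` of `F(P)` sits at the lattice point `(n + i − j, n − i − j)`, and it carries
the entry `t` iff that point lies weakly above `P_{k−t}` and strictly below `P_{k−t+1}`; so an
entry `t` forces `P_{k−t} ≠ P_{k−t+1}`. Conversely, if these paths differ, at some abscissa `x` the
lower one is strictly below the upper one, hence strictly below `1_n` and weakly above `P = P_0`.
Its point over `x`, at height `x − 2D` with `D` its number of downsteps so far, is the lattice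
point of the cell `(D, n − x + D)`, which lies in `F(P)` because `P` has at least `D` downsteps
among its first `x` steps. -/

theorem Finset.card_filter_lt_orderEmbOfFin {α : Type*} [LinearOrder α] (s : Finset α) {m : ℕ}
    (h : s.card = m) (i : Fin m) :
    #{a ∈ s | a < s.orderEmbOfFin h i} = i := by
  have himage : {a ∈ s | a < s.orderEmbOfFin h i} = (Iio i).image (s.orderEmbOfFin h) := by
    ext a
    simp only [mem_filter, mem_image, mem_Iio]
    constructor
    · rintro ⟨ha, hlt⟩
      obtain ⟨j, rfl⟩ : a ∈ Set.range (s.orderEmbOfFin h) := by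
        rwa [range_orderEmbOfFin]
      exact ⟨j, (s.orderEmbOfFin h).lt_iff_lt.mp hlt, rfl⟩
    · rintro ⟨j, hj, rfl⟩
      exact ⟨orderEmbOfFin_mem s h j, (s.orderEmbOfFin h).lt_iff_lt.mpr hj⟩
  rw [himage, card_image_of_injective _ (s.orderEmbOfFin h).injective, Fin.card_Iio]

def downCount (n : ℕ) (P : Fin n → Bool) (x : ℕ) : ℕ :=
  #{j ∈ Icc 1 x | stp n P j = false}

section Paths

variable {n : ℕ}

lemma stp_succ (P : Fin n → Bool) (a : Fin n) : stp n P (a + 1) = P a := by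
  rw [stp, dif_pos ⟨by omega, by omega⟩]
  exact congrArg P (Fin.ext (by simp))

lemma ht_eq_sub_two_mul_downCount (P : Fin n → Bool) (x : ℕ) :
    ht n P x = x - 2 * downCount n P x := by
  have hstep : ∀ j ∈ Icc 1 x, (if stp n P j then (1 : ℤ) else -1)
      = 1 - 2 * (if stp n P j = false then (1 : ℤ) else 0) := by
    intro j _
    cases stp n P j <;> simp
  rw [ht, downCount, sum_congr rfl hstep, sum_sub_distrib, ← mul_sum, sum_boole, sum_const,
    Nat.card_Icc]
  push_cast
  ring

lemma ht_pTop (x : ℕ) : ht n (pTop n) x = x := by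
  have hstp : ∀ j, stp n (pTop n) j = true := fun j => by
    unfold stp pTop; split <;> rfl
  simp [ht, hstp]

lemma eq_of_ht_eq {P Q : Fin n → Bool} (h : ∀ x ≤ n, ht n P x = ht n Q x) : P = Q := by
  funext a
  have hsucc := h (a + 1) (by omega)
  rw [ht, ht, sum_Icc_succ_top (by omega), sum_Icc_succ_top (by omega), ← ht, ← ht,
    h a (by omega), stp_succ, stp_succ] at hsucc
  cases hP : P a <;> cases hQ : Q a <;> simp_all

lemma exists_ht_lt_of_pLE_of_ne {P Q : Fin n → Bool} (hle : pLE n P Q) (hne : P ≠ Q) :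
    ∃ x ≤ n, ht n P x < ht n Q x := by
  by_contra! hge
  exact hne (eq_of_ht_eq fun x hx => le_antisymm (hle x hx) (hge x hx))

lemma downCount_eq_card_dsteps_filter (P : Fin n → Bool) {x : ℕ} (hx : x ≤ n) :
    downCount n P x = #{a ∈ dsteps n P | a.val < x} := by
  rw [downCount, ← card_image_of_injective _ (f := fun a : Fin n => (a : ℕ) + 1)
    fun a b hab => Fin.ext (by simpa using hab)]
  congr 1
  ext j
  simp only [mem_filter, mem_Icc, mem_image, dsteps, mem_univ, true_and]
  constructor
  · rintro ⟨⟨hj1, hjx⟩, hdown⟩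
    refine ⟨⟨j - 1, by omega⟩, ⟨?_, by simp; omega⟩, by simp; omega⟩
    rwa [← stp_succ P ⟨j - 1, by omega⟩, Fin.val_mk, Nat.sub_add_cancel hj1]
  · rintro ⟨a, ⟨hdown, hax⟩, rfl⟩
    exact ⟨⟨by omega, by omega⟩, by rwa [stp_succ]⟩

lemma downCount_le_nd (P : Fin n → Bool) {x : ℕ} (hx : x ≤ n) : downCount n P x ≤ nd n P := by
  rw [downCount_eq_card_dsteps_filter P hx]
  exact card_filter_le _ _

lemma dpos_lt_of_lt_downCount (P : Fin n → Bool) {x : ℕ} (hx : x ≤ n) (i : Fin (nd n P))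
    (hi : (i : ℕ) < downCount n P x) : dpos n P i < x := by
  by_contra! hge
  have hsub : {a ∈ dsteps n P | a.val < x} ⊆
      {a ∈ dsteps n P | a < (dsteps n P).orderEmbOfFin rfl i} := by
    intro a ha
    simp only [mem_filter] at ha ⊢
    exact ⟨ha.1, Fin.lt_def.mpr (lt_of_lt_of_le ha.2 hge)⟩
  have hcard := (card_le_card hsub).trans_eq (card_filter_lt_orderEmbOfFin _ rfl i)
  rw [← downCount_eq_card_dsteps_filter P hx] at hcard
  omega

lemma exists_mem_F_of_ht_le (P Q : Fin n → Bool) {x : ℕ} (hx : x ≤ n)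
    (hPQ : ht n P x ≤ ht n Q x) (hQ : ht n Q x < x) :
    ∃ c ∈ F n P, cellX n c = x ∧ cellY n c = ht n Q x := by
  rw [ht_eq_sub_two_mul_downCount P, ht_eq_sub_two_mul_downCount Q] at hPQ
  rw [ht_eq_sub_two_mul_downCount Q] at hQ ⊢
  set D := downCount n Q x
  have hDP : D ≤ downCount n P x := by omega
  have hDm : D - 1 < nd n P := by have := downCount_le_nd P hx; omega
  have hpos := dpos_lt_of_lt_downCount P hx ⟨D - 1, hDm⟩ (by simp only; omega)
  refine ⟨(D, n - x + D), ⟨⟨D - 1, hDm⟩, by simp only; omega, by simp only; omega, ?_⟩, ?_, ?_⟩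
  · simp only [lam]; omega
  · simp only [cellX]; omega
  · simp only [cellY]; omega

end Paths

section Multichains

variable {n k : ℕ} {C : Fin (k + 1) → Fin n → Bool}

lemma pLE_of_le (hC : ∀ i : Fin k, pLE n (C i.castSucc) (C i.succ)) {a b : Fin (k + 1)}
    (hab : a ≤ b) : pLE n (C a) (C b) := by
  induction b using Fin.induction with
  | zero => rw [Fin.le_zero_iff.mp hab]; exact fun _ _ => le_rfl
  | succ i ih =>
    rcases hab.lt_or_eq with hlt | rfl
    · exact fun x hx => (ih (Fin.le_castSucc_iff.mpr hlt) x hx).trans (hC i x hx)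
    · exact fun _ _ => le_rfl

end Multichains

section Correspondence

variable {n k : ℕ} {P : Fin n → Bool} {C : Fin (k + 1) → Fin n → Bool}
  {T : {c : ℕ × ℕ // c ∈ F n P} → ℕ}

lemma corr.ne_of_eq (hco : corr n k P C T) (i : Fin k) (c : {c : ℕ × ℕ // c ∈ F n P})
    (hc : T c = k - i) : C i.castSucc ≠ C i.succ := by
  intro heq
  obtain ⟨hlow, hhigh⟩ := (hco c i i.isLt).mp hc
  change ht n (C i.castSucc) _ ≤ _ at hlow
  change _ < ht n (C i.succ) _ at hhigh
  rw [heq] at hlow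
  exact hlow.not_gt hhigh

lemma corr.exists_eq_of_ne (hco : corr n k P C T) (hC : isMultichain n k P C) (i : Fin k)
    (hne : C i.castSucc ≠ C i.succ) : ∃ c, T c = k - i := by
  obtain ⟨hmono, hC0, hCk⟩ := hC
  obtain ⟨x, hx, hlt⟩ := exists_ht_lt_of_pLE_of_ne (hmono i) hne
  have hbot : ht n P x ≤ ht n (C i.castSucc) x := by
    simpa [hC0] using pLE_of_le hmono (Fin.zero_le i.castSucc) x hx
  have htop : ht n (C i.succ) x ≤ x := by
    simpa [hCk, ht_pTop] using pLE_of_le hmono (Fin.le_last i.succ) x hx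
  obtain ⟨c, hcF, hcX, hcY⟩ := exists_mem_F_of_ht_le P _ hx hbot (hlt.trans_le htop)
  refine ⟨⟨c, hcF⟩, (hco ⟨c, hcF⟩ i i.isLt).mpr ⟨?_, ?_⟩⟩
  · change ht n (C i.castSucc) _ ≤ _
    rw [hcX, hcY]
  · change _ < ht n (C i.succ) _
    rwa [hcX, hcY]

end Correspondence

theorem stmt16_general (n k : ℕ) (P : Fin n → Bool)
    (C : Fin (k + 1) → Fin n → Bool) (hC : isMultichain n k P C)
    (T : {c : ℕ × ℕ // c ∈ F n P} → ℕ)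
    (hco : corr n k P C T) :
    (∀ i : Fin k, C i.castSucc ≠ C i.succ) ↔
    (∀ t, 1 ≤ t → t ≤ k → ∃ c, T c = t) := by
  constructor
  · intro hchain t ht1 htk
    obtain ⟨c, hc⟩ := hco.exists_eq_of_ne hC ⟨k - t, by omega⟩ (hchain _)
    exact ⟨c, by rw [hc]; simp only; omega⟩
  · intro hsurj i
    obtain ⟨c, hc⟩ := hsurj (k - i) (by omega) (by omega)
    exact hco.ne_of_eq i c hc

/-- Under the multichain–tableau correspondence, a multichain is a chain (all
inequalities strict) iff the set of entries of the tableau is exactly `{1, …, k}`. -/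
theorem stmt16 (n k : ℕ) (P : Fin n → Bool) (hn : 0 < n)
    (hd : stp n P 1 = false) (hk : 0 < k)
    (C : Fin (k + 1) → Fin n → Bool) (hC : isMultichain n k P C)
    (T : {c : ℕ × ℕ // c ∈ F n P} → ℕ) (hT : isTab n P T ∧ ∀ c, T c ≤ k)
    (hco : corr n k P C T) :
    (∀ i : Fin k, C i.castSucc ≠ C i.succ) ↔
    (∀ t, 1 ≤ t → t ≤ k → ∃ c, T c = t) :=
  stmt16_general n k P C hC T hco
end
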